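/- For a non-empty subset I = {i_1 < ⋯ < i_k} ⊆ {1,…,r−1}, the set ν_0(c_I) = c_I(Π_+) ∩ Π_+ of positive roots sent to positive roots by c_I^{-1} equals the disjoint union A_I ⊔ B_I, where A_I = {e_b − e_{n_I(a)} : a ∈ I, a < b < n_I(a)} and B_I = {e_{i_1} − e_q : i_1 < q ≤ r}. -/

import Mathlib

noncomputable section

open Finset

/-- `ee r i` is the standard basis vector `e_i` (1-based index) of `ℝ^r`. -/
def ee (r i : ℕ) : Fin r → ℝ := fun j => if (j : ℕ) + 1 = i then 1 else 0

/-- The type-`D_r` simple roots, 1-based: `α_i = e_i - e_{i+1}` for `i ≤ r-1`,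
`α_r = e_{r-1} + e_r`. -/
def sroot (r i : ℕ) : Fin r → ℝ :=
  if i = r then ee r (r - 1) + ee r r else ee r i - ee r (i + 1)

/-- Root-poset order: `ρ ≤ η` iff `η - ρ` is a non-negative integer combination
of the simple roots. -/
def rootLE (r : ℕ) (ρ η : Fin r → ℝ) : Prop :=
  ∃ m : ℕ → ℕ, η - ρ = ∑ i ∈ Finset.Icc 1 r, (m i : ℝ) • sroot r i

/-- The positive roots of type `D_r`: `e_i ± e_j` for `1 ≤ i < j ≤ r`. -/
def Pos (r : ℕ) : Set (Fin r → ℝ) :=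
  {v | ∃ i j, 1 ≤ i ∧ i < j ∧ j ≤ r ∧ (v = ee r i - ee r j ∨ v = ee r i + ee r j)}

/-- The `i`-th (1-based) coordinate of a vector. -/
def coordN (r : ℕ) (x : Fin r → ℝ) (i : ℕ) : ℝ :=
  ∑ j : Fin r, if (j : ℕ) + 1 = i then x j else 0

/-- The successor map on `I ∪ {r}`: least element of `I ∪ {r}` larger than `a`. -/
def nextI (r : ℕ) (I : Finset ℕ) (a : ℕ) : ℕ :=
  WithTop.untopD r (((insert r I).filter (fun x => a < x)).min)

/-- `min (I ∪ {r})`; equals `min I` for nonempty `I ⊆ {1,…,r-1}` and `r` for `I = ∅`. -/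
def minI (r : ℕ) (I : Finset ℕ) : ℕ := WithTop.untopD r ((insert r I).min)

/-- `max I` (0 if empty). -/
def maxI (I : Finset ℕ) : ℕ := WithBot.unbotD 0 (I.max)

/-- The increasing cycle `p_I` on `I ∪ {r}`, fixing all other points. -/
def pI (r : ℕ) (I : Finset ℕ) (a : ℕ) : ℕ :=
  if a ∈ I then nextI r I a else if a = r then minI r I else a

/-- Images of the basis vectors under `c_I`. -/
def cIb (r : ℕ) (I : Finset ℕ) (j : ℕ) : Fin r → ℝ :=
  if j = r then ee r (minI r I) else -(ee r (pI r I j))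

/-- The signed permutation `c_I`, extended linearly; for `I = ∅` it is `w_0`. -/
def cI (r : ℕ) (I : Finset ℕ) (x : Fin r → ℝ) : Fin r → ℝ :=
  ∑ j ∈ Finset.Icc 1 r, coordN r x j • cIb r I j

/-- Images of the basis vectors under `d_I`. -/
def dIb (r : ℕ) (I : Finset ℕ) (j : ℕ) : Fin r → ℝ :=
  if j = maxI I then ee r r
  else if j = r then -(ee r (minI r I))
  else -(ee r (pI r I j))

/-- The signed permutation `d_I`, extended linearly. -/
def dI (r : ℕ) (I : Finset ℕ) (x : Fin r → ℝ) : Fin r → ℝ :=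
  ∑ j ∈ Finset.Icc 1 r, coordN r x j • dIb r I j

/-- The longest element `w_0` for `r` odd: `e_i ↦ -e_i` for `i < r`, `e_r ↦ e_r`. -/
def w0 (r : ℕ) (x : Fin r → ℝ) : Fin r → ℝ :=
  fun j => if (j : ℕ) + 1 = r then x j else -(x j)

/-- The set `A_I`. -/
def AI (r : ℕ) (I : Finset ℕ) : Set (Fin r → ℝ) :=
  {v | ∃ a b, a ∈ I ∧ a < b ∧ b < nextI r I a ∧ v = ee r b - ee r (nextI r I a)}

/-- The set `B_I`. -/
def BI (r : ℕ) (I : Finset ℕ) : Set (Fin r → ℝ) :=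
  {v | ∃ q, minI r I < q ∧ q ≤ r ∧ v = ee r (minI r I) - ee r q}

/-- `ν₀(u) = u(Π₊) ∩ Π₊`. -/
def nu0 (r : ℕ) (u : (Fin r → ℝ) → (Fin r → ℝ)) : Set (Fin r → ℝ) :=
  {β | β ∈ Pos r ∧ ∃ γ ∈ Pos r, u γ = β}

/-- Arrow `α → β` in the rationality graph of `u`: `u⁻¹(α) ≤ β`,
expressed via a positive preimage `γ` of `α`. -/
def Arrow (r : ℕ) (u : (Fin r → ℝ) → (Fin r → ℝ)) (α β : Fin r → ℝ) : Prop :=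
  ∃ γ ∈ Pos r, u γ = α ∧ rootLE r γ β

/-- The rationality graph of `u` has a directed cycle. -/
def HasCycle (r : ℕ) (u : (Fin r → ℝ) → (Fin r → ℝ)) : Prop :=
  ∃ (n : ℕ) (f : ℕ → (Fin r → ℝ)), 0 < n ∧ (∀ i ≤ n, f i ∈ nu0 r u) ∧
    f 0 = f n ∧ ∀ i < n, Arrow r u (f i) (f (i + 1))

/-- The simple reflection `s_a` for `1 ≤ a ≤ r-1`: swaps coordinates `a` and `a+1`. -/
def sw (r a : ℕ) (x : Fin r → ℝ) : Fin r → ℝ := fun j =>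
  if (j : ℕ) + 1 = a then coordN r x (a + 1)
  else if (j : ℕ) + 1 = a + 1 then coordN r x a
  else x j

/-- The spin reflection `s_r`: `e_{r-1} ↦ -e_r`, `e_r ↦ -e_{r-1}`. -/
def sSpin (r : ℕ) (x : Fin r → ℝ) : Fin r → ℝ := fun j =>
  if (j : ℕ) + 1 = r - 1 then -(coordN r x r)
  else if (j : ℕ) + 1 = r then -(coordN r x (r - 1))
  else x j



-- ===== auxiliary lemmas =====

lemma ee_apply (r i : ℕ) (t : Fin r) : ee r i t = if (t : ℕ) + 1 = i then 1 else 0 := rfl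

lemma ee_nonneg (r i : ℕ) (t : Fin r) : 0 ≤ ee r i t := by
  rw [ee_apply]; split <;> norm_num

lemma coordN_eq (r : ℕ) (x : Fin r → ℝ) (t : ℕ) (h1 : 1 ≤ t) (h2 : t ≤ r) :
    coordN r x t = x ⟨t - 1, by omega⟩ := by
  unfold coordN
  rw [Finset.sum_eq_single (⟨t - 1, by omega⟩ : Fin r)]
  · simp; omega
  · intro b _ hb
    have : (b : ℕ) + 1 ≠ t := by
      intro h; apply hb; apply Fin.ext; simp; omega
    simp [this]
  · intro h; exact absurd (Finset.mem_univ _) h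

lemma coordN_add (r : ℕ) (x y : Fin r → ℝ) (t : ℕ) :
    coordN r (x + y) t = coordN r x t + coordN r y t := by
  unfold coordN
  rw [← Finset.sum_add_distrib]
  exact Finset.sum_congr rfl fun j _ => by split <;> simp

lemma coordN_neg (r : ℕ) (x : Fin r → ℝ) (t : ℕ) :
    coordN r (-x) t = -coordN r x t := by
  unfold coordN
  rw [← Finset.sum_neg_distrib]
  exact Finset.sum_congr rfl fun j _ => by split <;> simp

lemma cI_add (r : ℕ) (I : Finset ℕ) (x y : Fin r → ℝ) :
    cI r I (x + y) = cI r I x + cI r I y := by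
  unfold cI
  rw [← Finset.sum_add_distrib]
  exact Finset.sum_congr rfl fun j _ => by rw [coordN_add, add_smul]

lemma cI_neg (r : ℕ) (I : Finset ℕ) (x : Fin r → ℝ) :
    cI r I (-x) = -cI r I x := by
  unfold cI
  rw [← Finset.sum_neg_distrib]
  exact Finset.sum_congr rfl fun j _ => by rw [coordN_neg, neg_smul]

lemma cI_sub (r : ℕ) (I : Finset ℕ) (x y : Fin r → ℝ) :
    cI r I (x - y) = cI r I x - cI r I y := by
  rw [sub_eq_add_neg, cI_add, cI_neg, sub_eq_add_neg]

lemma coordN_ee (r i t : ℕ) (hi1 : 1 ≤ i) (hi2 : i ≤ r) (ht1 : 1 ≤ t) (ht2 : t ≤ r) :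
    coordN r (ee r i) t = if t = i then 1 else 0 := by
  rw [coordN_eq r _ t ht1 ht2, ee_apply]
  congr 1
  simp; omega

lemma cI_ee (r : ℕ) (I : Finset ℕ) (i : ℕ) (hi1 : 1 ≤ i) (hi2 : i ≤ r) :
    cI r I (ee r i) = cIb r I i := by
  unfold cI
  rw [Finset.sum_eq_single_of_mem i (Finset.mem_Icc.mpr ⟨hi1, hi2⟩)]
  · rw [coordN_ee r i i hi1 hi2 hi1 hi2, if_pos rfl, one_smul]
  · intro t ht hti
    rw [Finset.mem_Icc] at ht
    rw [coordN_ee r i t hi1 hi2 ht.1 ht.2, if_neg hti, zero_smul]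

lemma pos_coord {r : ℕ} {β : Fin r → ℝ} (h : β ∈ Pos r) : ∃ t : Fin r, β t = 1 := by
  obtain ⟨i, j, hi, hij, hjr, hv⟩ := h
  refine ⟨⟨i - 1, by omega⟩, ?_⟩
  have h1 : ee r i ⟨i - 1, by omega⟩ = 1 := by rw [ee_apply]; simp; omega
  have h2 : ee r j ⟨i - 1, by omega⟩ = 0 := by rw [ee_apply]; simp; omega
  rcases hv with hv | hv <;> rw [hv] <;> simp [h1, h2]

lemma not_pos_of_nonpos {r : ℕ} {β : Fin r → ℝ} (h : ∀ t, β t ≤ 0) : β ∉ Pos r := by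
  intro hp
  obtain ⟨t, ht⟩ := pos_coord hp
  have := h t
  linarith

lemma sub_eq_sub {r : ℕ} (c d m q : ℕ) (hc : 1 ≤ c) (hc' : c ≤ r) (hd : 1 ≤ d) (hd' : d ≤ r)
    (hcd : c ≠ d) (h : ee r c - ee r d = ee r m - ee r q) : c = m ∧ d = q := by
  have h1 := congrFun h ⟨c - 1, by omega⟩
  have h2 := congrFun h ⟨d - 1, by omega⟩
  simp only [Pi.sub_apply, ee_apply] at h1 h2
  rw [show c - 1 + 1 = c by omega] at h1
  rw [show d - 1 + 1 = d by omega] at h2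
  rw [if_pos rfl, if_neg hcd] at h1
  rw [if_neg (by omega : ¬ d = c), if_pos rfl] at h2
  constructor
  · by_contra hcm
    rw [if_neg hcm] at h1
    split_ifs at h1 <;> norm_num at h1
  · by_contra hdq
    rw [if_neg hdq] at h2
    split_ifs at h2 <;> norm_num at h2

lemma sub_ne_add {r : ℕ} (a b c d : ℕ) (ha : 1 ≤ a) (ha' : a ≤ r) (hb : 1 ≤ b) (hb' : b ≤ r)
    (hc : 1 ≤ c) (hd' : d ≤ r) (hcd : c < d) :
    ee r a - ee r b ≠ ee r c + ee r d := by
  intro h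
  have h1 := congrFun h ⟨d - 1, by omega⟩
  have h2 := congrFun h ⟨b - 1, by omega⟩
  simp only [Pi.sub_apply, Pi.add_apply, ee_apply] at h1 h2
  rw [show d - 1 + 1 = d by omega] at h1
  rw [show b - 1 + 1 = b by omega] at h2
  rw [if_neg (by omega : ¬ d = c), if_pos rfl] at h1
  rw [if_pos rfl] at h2
  have hda : d = a := by
    by_contra hda
    rw [if_neg hda] at h1
    split_ifs at h1 <;> norm_num at h1
  rw [if_pos hda] at h1
  have hdb : ¬ d = b := by
    by_contra hdb
    rw [if_pos hdb] at h1; norm_num at h1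
  rw [if_neg hdb] at h1
  have hba : ¬ b = a := by omega
  rw [if_neg hba] at h2
  split_ifs at h2 <;> norm_num at h2

lemma minI_eq (r : ℕ) (I : Finset ℕ) (hI : I.Nonempty) (hIs : I ⊆ Finset.Icc 1 (r - 1))
    (hr : 1 ≤ r) : minI r I ∈ I ∧ ∀ x ∈ I, minI r I ≤ x := by
  have hne : (insert r I).Nonempty := Finset.insert_nonempty _ _
  have hmin : minI r I = (insert r I).min' hne := by
    unfold minI
    rw [← Finset.coe_min' hne]
    rfl
  obtain ⟨a, ha⟩ := hI
  have har : a < r := by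
    have := Finset.mem_Icc.mp (hIs ha); omega
  have hle : (insert r I).min' hne ≤ a := Finset.min'_le _ _ (Finset.mem_insert_of_mem ha)
  have hmem := Finset.min'_mem (insert r I) hne
  rw [Finset.mem_insert] at hmem
  constructor
  · rw [hmin]
    rcases hmem with h | h
    · omega
    · exact h
  · intro x hx
    rw [hmin]
    exact Finset.min'_le _ _ (Finset.mem_insert_of_mem hx)

lemma nextI_spec (r : ℕ) (I : Finset ℕ) (a : ℕ) (ha : a < r) :
    a < nextI r I a ∧ nextI r I a ∈ insert r I ∧
      ∀ x ∈ insert r I, a < x → nextI r I a ≤ x := by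
  set s := (insert r I).filter (fun x => a < x) with hs
  have hne : s.Nonempty := ⟨r, by simp [hs, ha]⟩
  have hmin : nextI r I a = s.min' hne := by
    unfold nextI
    rw [← hs, ← Finset.coe_min' hne]
    rfl
  have hmem := Finset.mem_filter.mp (Finset.min'_mem s hne)
  refine ⟨by rw [hmin]; exact hmem.2, by rw [hmin]; exact hmem.1, ?_⟩
  intro x hx hax
  rw [hmin]
  exact Finset.min'_le _ _ (Finset.mem_filter.mpr ⟨hx, hax⟩)

lemma pI_of_mem {r : ℕ} {I : Finset ℕ} {a : ℕ} (h : a ∈ I) : pI r I a = nextI r I a :=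
  if_pos h

lemma pI_of_not_mem {r : ℕ} {I : Finset ℕ} {a : ℕ} (h : a ∉ I) (h2 : a ≠ r) : pI r I a = a := by
  unfold pI
  rw [if_neg h, if_neg h2]

lemma pI_range {r : ℕ} {I : Finset ℕ} (hIs : I ⊆ Finset.Icc 1 (r - 1)) (hr : 1 ≤ r)
    {i : ℕ} (hi1 : 1 ≤ i) (hi2 : i ≤ r - 1) : 1 ≤ pI r I i ∧ pI r I i ≤ r := by
  by_cases h : i ∈ I
  · rw [pI_of_mem h]
    obtain ⟨h1, h2, _⟩ := nextI_spec r I i (by omega)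
    rw [Finset.mem_insert] at h2
    constructor
    · omega
    · rcases h2 with h2 | h2
      · omega
      · have := Finset.mem_Icc.mp (hIs h2); omega
  · rw [pI_of_not_mem h (by omega)]
    omega

lemma inversion {r : ℕ} {I : Finset ℕ} (hIs : I ⊆ Finset.Icc 1 (r - 1)) (hr : 1 ≤ r)
    {i j : ℕ} (hi1 : 1 ≤ i) (hij : i < j) (hj : j ≤ r - 1)
    (h : pI r I j < pI r I i) : i ∈ I ∧ j < nextI r I i ∧ j ∉ I := by
  have hir : i < r := by omega
  have hjr : j < r := by omega
  have hiI : i ∈ I := by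
    by_contra hiI
    rw [pI_of_not_mem hiI (by omega)] at h
    by_cases hjI : j ∈ I
    · rw [pI_of_mem hjI] at h
      have := (nextI_spec r I j hjr).1
      omega
    · rw [pI_of_not_mem hjI (by omega)] at h
      omega
  rw [pI_of_mem hiI] at h
  obtain ⟨hni1, hni2, hni3⟩ := nextI_spec r I i hir
  have hjI : j ∉ I := by
    intro hjI
    have h1 : nextI r I i ≤ j := hni3 j (Finset.mem_insert_of_mem hjI) hij
    rw [pI_of_mem hjI] at h
    have := (nextI_spec r I j hjr).1
    omega
  rw [pI_of_not_mem hjI (by omega)] at h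
  exact ⟨hiI, h, hjI⟩

lemma pI_surj {r : ℕ} {I : Finset ℕ} (hI : I.Nonempty) (hIs : I ⊆ Finset.Icc 1 (r - 1))
    (hr : 1 ≤ r) {q : ℕ} (hq1 : 1 ≤ q) (hq2 : q ≤ r) (hqm : q ≠ minI r I) :
    ∃ i, 1 ≤ i ∧ i ≤ r - 1 ∧ pI r I i = q := by
  obtain ⟨hm1, hm2⟩ := minI_eq r I hI hIs hr
  by_cases hqI : q ∈ I
  · -- take the largest element of I below q
    have hmq : minI r I < q := by
      have := hm2 q hqI
      omega
    set s := I.filter (fun x => x < q) with hs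
    have hne : s.Nonempty := ⟨minI r I, Finset.mem_filter.mpr ⟨hm1, hmq⟩⟩
    set a := s.max' hne with ha
    have haI : a ∈ I := (Finset.mem_filter.mp (Finset.max'_mem s hne)).1
    have haq : a < q := (Finset.mem_filter.mp (Finset.max'_mem s hne)).2
    have har : a ≤ r - 1 := by have := Finset.mem_Icc.mp (hIs haI); omega
    have ha1 : 1 ≤ a := by have := Finset.mem_Icc.mp (hIs haI); omega
    refine ⟨a, ha1, har, ?_⟩
    rw [pI_of_mem haI]
    obtain ⟨hn1, hn2, hn3⟩ := nextI_spec r I a (by omega)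
    have hle : nextI r I a ≤ q := hn3 q (Finset.mem_insert_of_mem hqI) haq
    by_contra hne'
    have hlt : nextI r I a < q := by omega
    have hnI : nextI r I a ∈ I := by
      rcases Finset.mem_insert.mp hn2 with h | h
      · omega
      · exact h
    have : nextI r I a ≤ a := Finset.le_max' s _ (Finset.mem_filter.mpr ⟨hnI, hlt⟩)
    omega
  · by_cases hqr : q = r
    · -- take max I
      set a := I.max' hI with ha
      have haI : a ∈ I := Finset.max'_mem I hI
      have har : a ≤ r - 1 := by have := Finset.mem_Icc.mp (hIs haI); omega
      have ha1 : 1 ≤ a := by have := Finset.mem_Icc.mp (hIs haI); omega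
      refine ⟨a, ha1, har, ?_⟩
      rw [pI_of_mem haI]
      obtain ⟨hn1, hn2, hn3⟩ := nextI_spec r I a (by omega)
      rcases Finset.mem_insert.mp hn2 with h | h
      · omega
      · have : nextI r I a ≤ a := Finset.le_max' I _ h
        omega
    · refine ⟨q, hq1, by omega, ?_⟩
      exact pI_of_not_mem hqI hqr

/-- `ν₀(c_I) = A_I ⊔ B_I`. -/
theorem stmt7 (r : ℕ) (hr : 5 ≤ r) (hodd : Odd r)
    (I : Finset ℕ) (hI : I.Nonempty) (hIs : I ⊆ Finset.Icc 1 (r - 1)) :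
    nu0 r (cI r I) = AI r I ∪ BI r I ∧ Disjoint (AI r I) (BI r I) := by
  have hr1 : 1 ≤ r := by omega
  obtain ⟨hm1, hm2⟩ := minI_eq r I hI hIs hr1
  have hm1' := Finset.mem_Icc.mp (hIs hm1)
  constructor
  · ext β
    simp only [Set.mem_union]
    constructor
    · rintro ⟨hβ, γ, hγ, hcγ⟩
      obtain ⟨i, j, hi1, hij, hjr, hv⟩ := hγ
      have hir : i ≤ r - 1 := by omega
      rcases hv with hv | hv
      · subst hv
        rw [cI_sub, cI_ee r I i (by omega) (by omega), cI_ee r I j (by omega) hjr] at hcγ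
        by_cases hjr' : j = r
        · exfalso
          rw [hjr'] at hcγ
          unfold cIb at hcγ
          rw [if_neg (by omega : ¬ i = r), if_pos rfl] at hcγ
          refine absurd hβ (not_pos_of_nonpos ?_)
          intro t
          rw [← hcγ]
          simp only [Pi.sub_apply, Pi.neg_apply]
          have := ee_nonneg r (pI r I i) t
          have := ee_nonneg r (minI r I) t
          linarith
        · unfold cIb at hcγ
          rw [if_neg (by omega : ¬ i = r), if_neg hjr'] at hcγ
          have hjr2 : j ≤ r - 1 := by omega
          obtain ⟨hpi1, hpi2⟩ := pI_range hIs hr1 hi1 hir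
          obtain ⟨hpj1, hpj2⟩ := pI_range hIs hr1 (by omega : 1 ≤ j) hjr2
          have hβeq : β = ee r (pI r I j) - ee r (pI r I i) := by
            rw [← hcγ]; ext t; simp only [Pi.sub_apply, Pi.neg_apply]; ring
          obtain ⟨c, d, hc1, hcd, hdr, hw⟩ := hβ
          rcases hw with hw | hw
          · obtain ⟨hceq, hdeq⟩ := sub_eq_sub c d (pI r I j) (pI r I i) hc1 (by omega)
              (by omega) hdr (by omega) (hw.symm.trans hβeq)
            have hinv : pI r I j < pI r I i := by omega
            obtain ⟨hiI, hjn, hjI⟩ := inversion hIs hr1 hi1 hij hjr2 hinv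
            left
            refine ⟨i, j, hiI, hij, hjn, ?_⟩
            rw [hβeq, pI_of_not_mem hjI (by omega), pI_of_mem hiI]
          · exact absurd (hβeq.symm.trans hw)
              (sub_ne_add (pI r I j) (pI r I i) c d hpj1 hpj2 hpi1 hpi2 hc1 hdr hcd)
      · subst hv
        rw [cI_add, cI_ee r I i (by omega) (by omega), cI_ee r I j (by omega) hjr] at hcγ
        by_cases hjr' : j = r
        · rw [hjr'] at hcγ
          unfold cIb at hcγ
          rw [if_neg (by omega : ¬ i = r), if_pos rfl] at hcγ
          obtain ⟨hpi1, hpi2⟩ := pI_range hIs hr1 hi1 hir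
          have hβeq : β = ee r (minI r I) - ee r (pI r I i) := by
            rw [← hcγ]; ext t; simp only [Pi.sub_apply, Pi.neg_apply, Pi.add_apply]; ring
          obtain ⟨c, d, hc1, hcd, hdr, hw⟩ := hβ
          rcases hw with hw | hw
          · obtain ⟨hceq, hdeq⟩ := sub_eq_sub c d (minI r I) (pI r I i) hc1 (by omega)
              (by omega) hdr (by omega) (hw.symm.trans hβeq)
            right
            exact ⟨pI r I i, by omega, hpi2, hβeq⟩
          · exact absurd (hβeq.symm.trans hw)
              (sub_ne_add (minI r I) (pI r I i) c d (by omega) (by omega) hpi1 hpi2 hc1 hdr hcd)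
        · exfalso
          unfold cIb at hcγ
          rw [if_neg (by omega : ¬ i = r), if_neg hjr'] at hcγ
          refine absurd hβ (not_pos_of_nonpos ?_)
          intro t
          rw [← hcγ]
          simp only [Pi.add_apply, Pi.neg_apply]
          have := ee_nonneg r (pI r I i) t
          have := ee_nonneg r (pI r I j) t
          linarith
    · rintro (⟨a, b, haI, hab, hbn, hv⟩ | ⟨q, hq1, hq2, hv⟩)
      · have ha' := Finset.mem_Icc.mp (hIs haI)
        obtain ⟨hn1, hn2, hn3⟩ := nextI_spec r I a (by omega)
        have hnr : nextI r I a ≤ r := by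
          rcases Finset.mem_insert.mp hn2 with h | h
          · omega
          · have := Finset.mem_Icc.mp (hIs h); omega
        have hbI : b ∉ I := fun hbI => by
          have := hn3 b (Finset.mem_insert_of_mem hbI) hab; omega
        have hβ : β ∈ Pos r := ⟨b, nextI r I a, by omega, hbn, hnr, Or.inl hv⟩
        refine ⟨hβ, ee r a - ee r b, ⟨a, b, ha'.1, hab, by omega, Or.inl rfl⟩, ?_⟩
        rw [cI_sub, cI_ee r I a ha'.1 (by omega), cI_ee r I b (by omega) (by omega)]
        unfold cIb
        rw [if_neg (by omega : ¬ a = r), if_neg (by omega : ¬ b = r),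
          pI_of_mem haI, pI_of_not_mem hbI (by omega)]
        rw [hv]
        ext t; simp only [Pi.sub_apply, Pi.neg_apply]; ring
      · obtain ⟨i, hi1, hi2, hpi⟩ := pI_surj hI hIs hr1 (by omega : 1 ≤ q) hq2 (by omega)
        have hβ : β ∈ Pos r := ⟨minI r I, q, by omega, hq1, hq2, Or.inl hv⟩
        refine ⟨hβ, ee r i + ee r r, ⟨i, r, hi1, by omega, le_refl r, Or.inr rfl⟩, ?_⟩
        rw [cI_add, cI_ee r I i hi1 (by omega), cI_ee r I r hr1 (le_refl r)]
        unfold cIb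
        rw [if_neg (by omega : ¬ i = r), if_pos rfl, hpi, hv]
        ext t; simp only [Pi.sub_apply, Pi.neg_apply, Pi.add_apply]; ring
  · rw [Set.disjoint_left]
    rintro v ⟨a, b, haI, hab, hbn, hv⟩ ⟨q, hq1, hq2, hv'⟩
    have ha' := Finset.mem_Icc.mp (hIs haI)
    obtain ⟨hn1, hn2, hn3⟩ := nextI_spec r I a (by omega)
    have hnr : nextI r I a ≤ r := by
      rcases Finset.mem_insert.mp hn2 with h | h
      · omega
      · have := Finset.mem_Icc.mp (hIs h); omega
    obtain ⟨hbm, hnq⟩ := sub_eq_sub b (nextI r I a) (minI r I) q (by omega) (by omega)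
      (by omega) hnr (by omega) (hv.symm.trans hv')
    have := hm2 a haI
    omega

end
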